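/- arXiv:1702.05278 — 8 statements merged into one kernel-verified Lean document; each statement's English description precedes it below -/
import Mathlib

section
/- Let z : [0, ρ̄] → ℝ be continuous, C¹ on (0, ρ̄), with z(φ) < 0 for φ ∈ (0, ρ̄), z(ρ̄) = 0, satisfying ż(φ) = h(φ) − c − D(φ)g(φ)/z(φ) on (0, ρ̄), where h is continuous, D, g ≥ 0 are continuous with D(φ)g(φ)/(φ − ρ̄) → 0 as φ → ρ̄⁻. If c < h(ρ̄), then z is differentiable at ρ̄ (from the left) and ż(ρ̄) = h(ρ̄) − c. -/
/-! Near `ρ̄` the right-hand side of the equation is at least `ε := (h(ρ̄) - c)/2`, because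
`-D g / z > 0` there. By the mean value theorem the difference quotient `z(φ)/(φ - ρ̄)` is then at
least `ε`, so `D g / z = (D g / (φ - ρ̄)) / (z(φ)/(φ - ρ̄)) → 0`. Hence `ż(φ) → h(ρ̄) - c` as
`φ → ρ̄⁻`, and a function continuous at `ρ̄` whose derivative has a left limit there has that limit
as its left derivative. -/

open Set Filter Topology

theorem Filter.Tendsto.div_nhds_zero_of_eventually_le {α : Type*} {l : Filter α} {f q : α → ℝ}
    {ε : ℝ} (hε : 0 < ε) (hf : Tendsto f l (𝓝 0)) (hq : ∀ᶠ x in l, ε ≤ q x) :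
    Tendsto (fun x => f x / q x) l (𝓝 0) := by
  refine squeeze_zero_norm' ?_ (by simpa using hf.norm.mul_const ε⁻¹)
  filter_upwards [hq] with x hx
  rw [norm_div, div_eq_mul_inv, Real.norm_of_nonneg (hε.le.trans hx)]
  exact mul_le_mul_of_nonneg_left (inv_anti₀ hε hx) (norm_nonneg _)

theorem le_slope_of_forall_le_hasDerivAt {f f' : ℝ → ℝ} {a b C : ℝ} (hab : a < b)
    (hf : ContinuousOn f (Icc a b)) (hderiv : ∀ x ∈ Ioo a b, HasDerivAt f (f' x) x)
    (hC : ∀ x ∈ Ioo a b, C ≤ f' x) : C ≤ slope f a b := by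
  obtain ⟨ξ, hξ, hslope⟩ := exists_hasDerivAt_eq_slope f f' hab hf hderiv
  rw [slope_def_field, ← hslope]
  exact hC ξ hξ

theorem tendsto_slope_nhdsLT_of_tendsto_hasDerivAt {f f' : ℝ → ℝ} {s : Set ℝ} {b L : ℝ}
    (hs : s ∈ 𝓝[<] b) (hf : ContinuousWithinAt f s b)
    (hderiv : ∀ x ∈ s, HasDerivAt f (f' x) x) (hlim : Tendsto f' (𝓝[<] b) (𝓝 L)) :
    Tendsto (slope f b) (𝓝[<] b) (𝓝 L) := by
  have hderiv_eq : f' =ᶠ[𝓝[<] b] deriv f := by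
    filter_upwards [hs] with x hx
    exact (hderiv x hx).deriv.symm
  have hL : HasDerivWithinAt f L (Iio b) b :=
    (hasDerivWithinAt_Iic_of_tendsto_deriv
      (fun x hx => (hderiv x hx).differentiableAt.differentiableWithinAt) hf hs
      (hlim.congr' hderiv_eq)).Iio_of_Iic
  exact (hasDerivWithinAt_iff_tendsto_slope' self_notMem_Iio).1 hL

theorem stmt0_general (ρ : ℝ) (hρ : 0 < ρ) (h D g z : ℝ → ℝ) (c : ℝ)
    (hh : ContinuousOn h (Icc 0 ρ))
    (hDpos : ∀ φ ∈ Ioo 0 ρ, 0 < D φ) (hgpos : ∀ φ ∈ Ioo 0 ρ, 0 < g φ)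
    (hz : ContinuousOn z (Icc 0 ρ))
    (hzneg : ∀ φ ∈ Ioo 0 ρ, z φ < 0) (hzρ : z ρ = 0)
    (hode : ∀ φ ∈ Ioo 0 ρ, HasDerivAt z (h φ - c - D φ * g φ / z φ) φ)
    (hlim : Tendsto (fun φ => D φ * g φ / (φ - ρ)) (𝓝[<] ρ) (𝓝 0))
    (hc : c < h ρ) :
    Tendsto (fun φ => (z φ - z ρ) / (φ - ρ)) (𝓝[<] ρ) (𝓝 (h ρ - c)) := by
  have hρmem : ρ ∈ Icc 0 ρ := right_mem_Icc.2 hρ.le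
  have hIoo : Ioo 0 ρ ∈ 𝓝[<] ρ := Ioo_mem_nhdsLT hρ
  have hh_left : Tendsto h (𝓝[<] ρ) (𝓝 (h ρ)) := by
    simpa [ContinuousWithinAt, nhdsWithin_Ioo_eq_nhdsLT hρ] using
      (hh ρ hρmem).mono Ioo_subset_Icc_self
  obtain ⟨ε, hε, hcε⟩ : ∃ ε > 0, c + ε < h ρ := ⟨(h ρ - c) / 2, by linarith, by linarith⟩
  obtain ⟨a, ha, haS⟩ := mem_nhdsLT_iff_exists_Ioo_subset.1 <|
    inter_mem hIoo (hh_left.eventually (lt_mem_nhds hcε))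
  have hrhs : ∀ ξ ∈ Ioo a ρ, ε ≤ h ξ - c - D ξ * g ξ / z ξ := fun ξ hξ => by
    obtain ⟨hξ0, hhξ : c + ε < h ξ⟩ := haS hξ
    have : D ξ * g ξ / z ξ < 0 :=
      div_neg_of_pos_of_neg (mul_pos (hDpos ξ hξ0) (hgpos ξ hξ0)) (hzneg ξ hξ0)
    linarith
  have hslope : ∀ φ ∈ Ioo a ρ, ε ≤ slope z ρ φ := fun φ hφ => by
    rw [slope_comm]
    exact le_slope_of_forall_le_hasDerivAt hφ.2
      (hz.mono (Icc_subset_Icc (haS hφ).1.1.le le_rfl))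
      (fun ξ hξ => hode ξ (Ioo_subset_Ioo (haS hφ).1.1.le le_rfl hξ))
      (fun ξ hξ => hrhs ξ (Ioo_subset_Ioo hφ.1.le le_rfl hξ))
  have hDgz : Tendsto (fun φ => D φ * g φ / z φ) (𝓝[<] ρ) (𝓝 0) := by
    refine (hlim.div_nhds_zero_of_eventually_le (q := slope z ρ) hε ?_).congr' ?_
    · filter_upwards [Ioo_mem_nhdsLT ha] with φ hφ using hslope φ hφ
    · filter_upwards [self_mem_nhdsWithin] with φ (hφ : φ < ρ)
      rw [slope_def_field, hzρ, sub_zero, div_div_div_cancel_right₀ (sub_ne_zero.2 hφ.ne)]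
  have hderiv_lim : Tendsto (fun φ => h φ - c - D φ * g φ / z φ) (𝓝[<] ρ) (𝓝 (h ρ - c)) := by
    simpa using (hh_left.sub_const c).sub hDgz
  simpa [slope_fun_def_field] using tendsto_slope_nhdsLT_of_tendsto_hasDerivAt hIoo
    ((hz ρ hρmem).mono Ioo_subset_Icc_self) hode hderiv_lim

theorem stmt0 (ρ : ℝ) (hρ : 0 < ρ) (h D g z : ℝ → ℝ) (c : ℝ)
    (hh : ContinuousOn h (Icc 0 ρ))
    (hD : ContinuousOn D (Icc 0 ρ)) (hg : ContinuousOn g (Icc 0 ρ))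
    (hDpos : ∀ φ ∈ Ioo 0 ρ, 0 < D φ) (hgpos : ∀ φ ∈ Ioo 0 ρ, 0 < g φ)
    (hgρ : g ρ = 0) (hDρ : D ρ = 0)
    (hz : ContinuousOn z (Icc 0 ρ))
    (hzneg : ∀ φ ∈ Ioo 0 ρ, z φ < 0) (hzρ : z ρ = 0)
    (hode : ∀ φ ∈ Ioo 0 ρ, HasDerivAt z (h φ - c - D φ * g φ / z φ) φ)
    (hlim : Tendsto (fun φ => D φ * g φ / (φ - ρ)) (𝓝[<] ρ) (𝓝 0))
    (hc : c < h ρ) :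
    Tendsto (fun φ => (z φ - z ρ) / (φ - ρ)) (𝓝[<] ρ) (𝓝 (h ρ - c)) :=
  stmt0_general ρ hρ h D g z c hh hDpos hgpos hz hzneg hzρ hode hlim hc
end

section
/- Let z : [0, ρ̄] → ℝ be continuous, C¹ on (0, ρ̄), with z(φ) < 0 for φ ∈ (0, ρ̄), z(ρ̄) = 0, satisfying ż(φ) = h(φ) − c − D(φ)g(φ)/z(φ) on (0, ρ̄). Assume D(φ)g(φ)/(φ − ρ̄) → ℓ as φ → ρ̄⁻ with −∞ < ℓ < 0. Then z is differentiable from the left at ρ̄ and ż(ρ̄) = (h(ρ̄) − c + √((h(ρ̄)−c)² − 4ℓ))/2. -/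
/-!
Write `w φ = z φ / (φ - ρ) > 0`, the slope of `z` seen from `(ρ, 0)`. The equation for `z` becomes
`w' = (w² - a w + q) / (w (ρ - φ))` with `a = h - c` and `q = D g / (φ - ρ) < 0`, so `w` increases
exactly when it lies above the positive root `r` of `X² - a X + q`, and `r` tends to the claimed
limit `L` at `ρ`. If `w` were above `L` by a margin close to `ρ`, comparison with a barrier
`c + K / (ρ - φ)` would keep `-z = w (ρ - φ)` away from `0`; if it were below `L` by a margin,
comparison with a multiple of `log (ρ - φ)` would drive `w` negative. Hence `w → L`.
-/

open Set Filter Topology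

noncomputable def upperRoot (a q : ℝ) : ℝ := (a + Real.sqrt (a ^ 2 - 4 * q)) / 2

theorem Filter.Tendsto.upperRoot {α : Type*} {l : Filter α} {a q : α → ℝ} {a₀ q₀ : ℝ}
    (ha : Tendsto a l (𝓝 a₀)) (hq : Tendsto q l (𝓝 q₀)) :
    Tendsto (fun x => upperRoot (a x) (q x)) l (𝓝 (upperRoot a₀ q₀)) :=
  (ha.add ((ha.pow 2).sub (hq.const_mul 4)).sqrt).div_const 2

section Quadratic

variable {a q x κ : ℝ}

theorem sq_sub_mul_add_eq_mul (hdisc : 0 ≤ a ^ 2 - 4 * q) :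
    x ^ 2 - a * x + q = (x - upperRoot a q) * (x - (a - upperRoot a q)) := by
  have hs := Real.sq_sqrt hdisc
  unfold upperRoot
  linear_combination (1 / 4 : ℝ) * hs

theorem sub_upperRoot_neg (hq : q < 0) : a - upperRoot a q < 0 := by
  have hs := Real.sq_sqrt (by nlinarith : 0 ≤ a ^ 2 - 4 * q)
  have hs0 := Real.sqrt_nonneg (a ^ 2 - 4 * q)
  unfold upperRoot
  nlinarith

theorem mul_lt_sq_sub_mul_add (hq : q < 0) (hx : 0 < x) (hκ : 0 ≤ κ)
    (h : upperRoot a q + κ < x) : κ * x < x ^ 2 - a * x + q := by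
  rw [sq_sub_mul_add_eq_mul (by nlinarith)]
  nlinarith [sub_upperRoot_neg (a := a) hq]

theorem sq_sub_mul_add_lt_neg_mul (hq : q < 0) (hx : 0 < x) (hκ : 0 ≤ κ)
    (h : x < upperRoot a q - κ) : x ^ 2 - a * x + q < -(κ * x) := by
  rw [sq_sub_mul_add_eq_mul (by nlinarith)]
  nlinarith [sub_upperRoot_neg (a := a) hq]

end Quadratic

theorem image_le_of_deriv_lt_deriv_boundary_Ico {f f' B B' : ℝ → ℝ} {a b : ℝ}
    (hf : ∀ x ∈ Ico a b, HasDerivAt f (f' x) x) (hB : ∀ x ∈ Ico a b, HasDerivAt B (B' x) x)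
    (ha : f a ≤ B a) (bound : ∀ x ∈ Ico a b, f x = B x → f' x < B' x) :
    ∀ x ∈ Ico a b, f x ≤ B x := by
  intro x hx
  have hsub : Icc a x ⊆ Ico a b := fun t ht => ⟨ht.1, ht.2.trans_lt hx.2⟩
  have hsub' : Ico a x ⊆ Ico a b := Ico_subset_Icc_self.trans hsub
  exact image_le_of_deriv_right_lt_deriv_boundary'
    (fun t ht => (hf t (hsub ht)).continuousAt.continuousWithinAt)
    (fun t ht => (hf t (hsub' ht)).hasDerivWithinAt) ha
    (fun t ht => (hB t (hsub ht)).continuousAt.continuousWithinAt)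
    (fun t ht => (hB t (hsub' ht)).hasDerivWithinAt) (fun t ht => bound t (hsub' ht))
    ⟨hx.1, le_rfl⟩

theorem eventually_forall_Ico_of_eventually_nhdsLT {b : ℝ} {p : ℝ → Prop}
    (h : ∀ᶠ x in 𝓝[<] b, p x) : ∀ᶠ y in 𝓝[<] b, ∀ x ∈ Ico y b, p x := by
  obtain ⟨α, hα, hsub⟩ := mem_nhdsLT_iff_exists_Ioo_subset.mp h
  filter_upwards [Ioo_mem_nhdsLT hα] with y hy x hx using hsub ⟨hy.1.trans_le hx.1, hx.2⟩

theorem tendsto_const_sub_nhdsLT (ρ : ℝ) : Tendsto (fun x => ρ - x) (𝓝[<] ρ) (𝓝[>] 0) :=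
  tendsto_nhdsWithin_iff.2 ⟨((continuous_sub_left ρ).tendsto' ρ 0 (sub_self ρ)).mono_left
    nhdsWithin_le_nhds, eventually_nhdsWithin_of_forall fun _ hx => mem_Ioi.2 (sub_pos.2 hx)⟩

theorem hasDerivAt_div_sub_const_of_hasDerivAt {z : ℝ → ℝ} {a p ρ φ : ℝ}
    (hz : HasDerivAt z (a - p / z φ) φ) (hφ : φ ≠ ρ) (hzφ : z φ ≠ 0) :
    HasDerivAt (fun x => z x / (x - ρ))
      (((z φ / (φ - ρ)) ^ 2 - a * (z φ / (φ - ρ)) + p / (φ - ρ)) /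
        (z φ / (φ - ρ) * (ρ - φ))) φ := by
  have hne : φ - ρ ≠ 0 := sub_ne_zero.mpr hφ
  have hne' : ρ - φ ≠ 0 := sub_ne_zero.mpr hφ.symm
  refine (hz.fun_div ((hasDerivAt_id' φ).sub_const ρ) hne).congr_deriv ?_
  field_simp
  ring

section Riccati

variable {α ρ φ₀ c : ℝ} {a q w : ℝ → ℝ}

theorem le_of_upperRoot_lt_of_riccati (hw : ∀ x ∈ Ioo α ρ, 0 < w x)
    (hq : ∀ x ∈ Ioo α ρ, q x < 0)
    (hderiv : ∀ x ∈ Ioo α ρ, HasDerivAt w ((w x ^ 2 - a x * w x + q x) / (w x * (ρ - x))) x)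
    (hlim : Tendsto (fun x => w x * (ρ - x)) (𝓝[<] ρ) (𝓝 0)) (hφ₀ : φ₀ ∈ Ioo α ρ)
    (hc : ∀ x ∈ Ico φ₀ ρ, upperRoot (a x) (q x) < c) : w φ₀ ≤ c := by
  have hsub : Ico φ₀ ρ ⊆ Ioo α ρ := fun x hx => ⟨hφ₀.1.trans_le hx.1, hx.2⟩
  by_contra! hcw
  set K := (w φ₀ - c) * (ρ - φ₀)
  have hK : 0 < K := mul_pos (sub_pos.2 hcw) (sub_pos.2 hφ₀.2)
  -- `w` stays above the barrier `c + K / (ρ - x)`, which blows up like `1 / (ρ - x)`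
  have hfence : ∀ x ∈ Ico φ₀ ρ, c + K / (ρ - x) ≤ w x := by
    refine image_le_of_deriv_lt_deriv_boundary_Ico (f' := fun x => K / (ρ - x) ^ 2)
      (fun x hx => ?_) (fun x hx => hderiv x (hsub hx)) ?_ (fun x hx hx' => ?_)
    · have hne : ρ - x ≠ 0 := (sub_pos.2 hx.2).ne'
      refine (((hasDerivAt_const x K).fun_div ((hasDerivAt_id' x).const_sub ρ) hne).const_add
        c).congr_deriv ?_
      field_simp
      ring
    · have hne : ρ - φ₀ ≠ 0 := (sub_pos.2 hφ₀.2).ne'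
      show c + K / (ρ - φ₀) ≤ w φ₀
      rw [mul_div_cancel_right₀ _ hne]
      linarith
    · have hρx : 0 < ρ - x := sub_pos.2 hx.2
      have hwx := hw x (hsub hx)
      have hκ : 0 < K / (ρ - x) := div_pos hK hρx
      have hP := mul_lt_sq_sub_mul_add (a := a x) (hq x (hsub hx)) hwx hκ.le
        (by linarith [hc x hx])
      calc K / (ρ - x) ^ 2 = K / (ρ - x) * w x / (w x * (ρ - x)) := by field_simp
        _ < _ := div_lt_div_of_pos_right hP (mul_pos hwx hρx)
  have hbound : ∀ᶠ x in 𝓝[<] ρ, K ≤ w x * (ρ - x) - c * (ρ - x) := by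
    filter_upwards [Ioo_mem_nhdsLT hφ₀.2] with x hx
    have hρx : 0 < ρ - x := sub_pos.2 hx.2
    have := hfence x ⟨hx.1.le, hx.2⟩
    rw [← le_sub_iff_add_le', div_le_iff₀ hρx] at this
    linarith
  have hlim' : Tendsto (fun x => w x * (ρ - x) - c * (ρ - x)) (𝓝[<] ρ) (𝓝 0) := by
    simpa using hlim.sub (((tendsto_const_sub_nhdsLT ρ).mono_right nhdsWithin_le_nhds).const_mul c)
  exact hK.not_ge (ge_of_tendsto hlim' hbound)

theorem le_of_lt_upperRoot_of_riccati (hw : ∀ x ∈ Ioo α ρ, 0 < w x)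
    (hq : ∀ x ∈ Ioo α ρ, q x < 0)
    (hderiv : ∀ x ∈ Ioo α ρ, HasDerivAt w ((w x ^ 2 - a x * w x + q x) / (w x * (ρ - x))) x)
    (hφ₀ : φ₀ ∈ Ioo α ρ) (hc : ∀ x ∈ Ico φ₀ ρ, c < upperRoot (a x) (q x)) : c ≤ w φ₀ := by
  have hsub : Ico φ₀ ρ ⊆ Ioo α ρ := fun x hx => ⟨hφ₀.1.trans_le hx.1, hx.2⟩
  by_contra! hwc
  set κ := c - w φ₀
  have hκ : 0 < κ := sub_pos.2 hwc
  -- `w` stays below the barrier `w φ₀ + κ log ((ρ - x) / (ρ - φ₀))`, which tends to `-∞`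
  set B := fun x => w φ₀ + κ * (Real.log (ρ - x) - Real.log (ρ - φ₀))
  have hfence : ∀ x ∈ Ico φ₀ ρ, w x ≤ B x := by
    refine image_le_of_deriv_lt_deriv_boundary_Ico (B' := fun x => κ * (-1 / (ρ - x)))
      (fun x hx => hderiv x (hsub hx)) (fun x hx => ?_) (by simp [B]) (fun x hx hx' => ?_)
    · exact ((((hasDerivAt_id' x).const_sub ρ).log (sub_pos.2 hx.2).ne').sub_const _
        |>.const_mul κ).const_add _
    · have hρx : 0 < ρ - x := sub_pos.2 hx.2
      have hwx := hw x (hsub hx)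
      have hBx : B x ≤ w φ₀ := by
        have := Real.log_le_log hρx (by linarith [hx.1] : ρ - x ≤ ρ - φ₀)
        simp only [B]
        nlinarith
      have hP := sq_sub_mul_add_lt_neg_mul (a := a x) (hq x (hsub hx)) hwx hκ.le
        (by linarith [hc x hx])
      calc _ < -(κ * w x) / (w x * (ρ - x)) := div_lt_div_of_pos_right hP (mul_pos hwx hρx)
        _ = κ * (-1 / (ρ - x)) := by field_simp
  have hlog : ∀ᶠ x in 𝓝[<] ρ, Real.log (ρ - x) < Real.log (ρ - φ₀) - w φ₀ / κ :=
    (Real.tendsto_log_nhdsGT_zero.comp (tendsto_const_sub_nhdsLT ρ)).eventually_lt_atBot _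
  obtain ⟨x, hlogx, hx⟩ := (hlog.and (Ioo_mem_nhdsLT hφ₀.2)).exists
  have hBx : B x < 0 := by
    have := mul_lt_mul_of_pos_left hlogx hκ
    simp only [B]
    field_simp at this
    linarith
  exact (hw x (hsub (Ioo_subset_Ico_self hx))).not_ge
    ((hfence x (Ioo_subset_Ico_self hx)).trans hBx.le)

theorem tendsto_of_riccati {L : ℝ} (hα : α < ρ)
    (hw : ∀ x ∈ Ioo α ρ, 0 < w x) (hq : ∀ x ∈ Ioo α ρ, q x < 0)
    (hderiv : ∀ x ∈ Ioo α ρ, HasDerivAt w ((w x ^ 2 - a x * w x + q x) / (w x * (ρ - x))) x)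
    (hlim : Tendsto (fun x => w x * (ρ - x)) (𝓝[<] ρ) (𝓝 0))
    (hroot : Tendsto (fun x => upperRoot (a x) (q x)) (𝓝[<] ρ) (𝓝 L)) :
    Tendsto w (𝓝[<] ρ) (𝓝 L) := by
  refine tendsto_order.2 ⟨fun b hb => ?_, fun b hb => ?_⟩
  · obtain ⟨c, hbc, hcL⟩ := exists_between hb
    filter_upwards [Ioo_mem_nhdsLT hα,
      eventually_forall_Ico_of_eventually_nhdsLT (hroot.eventually (lt_mem_nhds hcL))]
      with φ₀ hφ₀ hc
    exact hbc.trans_le (le_of_lt_upperRoot_of_riccati hw hq hderiv hφ₀ hc)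
  · obtain ⟨c, hLc, hcb⟩ := exists_between hb
    filter_upwards [Ioo_mem_nhdsLT hα,
      eventually_forall_Ico_of_eventually_nhdsLT (hroot.eventually (gt_mem_nhds hLc))]
      with φ₀ hφ₀ hc
    exact (le_of_upperRoot_lt_of_riccati hw hq hderiv hlim hφ₀ hc).trans_lt hcb

end Riccati

theorem stmt1_general (ρ : ℝ) (hρ : 0 < ρ) (h D g z : ℝ → ℝ) (c ℓ : ℝ)
    (hh : ContinuousOn h (Icc 0 ρ))
    (hDpos : ∀ φ ∈ Ioo 0 ρ, 0 < D φ) (hgpos : ∀ φ ∈ Ioo 0 ρ, 0 < g φ)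
    (hz : ContinuousOn z (Icc 0 ρ))
    (hzneg : ∀ φ ∈ Ioo 0 ρ, z φ < 0) (hzρ : z ρ = 0)
    (hode : ∀ φ ∈ Ioo 0 ρ, HasDerivAt z (h φ - c - D φ * g φ / z φ) φ)
    (hlim : Tendsto (fun φ => D φ * g φ / (φ - ρ)) (𝓝[<] ρ) (𝓝 ℓ)) :
    Tendsto (fun φ => (z φ - z ρ) / (φ - ρ)) (𝓝[<] ρ)
      (𝓝 ((h ρ - c + Real.sqrt ((h ρ - c) ^ 2 - 4 * ℓ)) / 2)) := by
  have hIcc : Icc 0 ρ ∈ 𝓝[<] ρ := Icc_mem_nhdsLT hρ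
  have hρmem : ρ ∈ Icc 0 ρ := right_mem_Icc.2 hρ.le
  have hhρ : Tendsto (fun φ => h φ - c) (𝓝[<] ρ) (𝓝 (h ρ - c)) :=
    ((hh ρ hρmem).mono_of_mem_nhdsWithin hIcc).tendsto.sub_const c
  have hzlim : Tendsto (fun φ => z φ / (φ - ρ) * (ρ - φ)) (𝓝[<] ρ) (𝓝 0) := by
    have := ((hz ρ hρmem).mono_of_mem_nhdsWithin hIcc).tendsto.neg
    rw [hzρ, neg_zero] at this
    refine this.congr' (eventually_nhdsWithin_of_forall fun φ hφ => ?_)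
    have : φ - ρ ≠ 0 := sub_ne_zero.2 (ne_of_lt hφ)
    field_simp
    ring
  simp only [hzρ, sub_zero]
  refine tendsto_of_riccati (a := fun φ => h φ - c) (q := fun φ => D φ * g φ / (φ - ρ)) hρ
    (fun φ hφ => div_pos_of_neg_of_neg (hzneg φ hφ) (sub_neg.2 hφ.2))
    (fun φ hφ => div_neg_of_pos_of_neg (mul_pos (hDpos φ hφ) (hgpos φ hφ)) (sub_neg.2 hφ.2))
    (fun φ hφ => hasDerivAt_div_sub_const_of_hasDerivAt (hode φ hφ) hφ.2.ne (hzneg φ hφ).ne)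
    hzlim (hhρ.upperRoot hlim)

theorem stmt1 (ρ : ℝ) (hρ : 0 < ρ) (h D g z : ℝ → ℝ) (c ℓ : ℝ)
    (hh : ContinuousOn h (Icc 0 ρ))
    (hD : ContinuousOn D (Icc 0 ρ)) (hg : ContinuousOn g (Icc 0 ρ))
    (hDpos : ∀ φ ∈ Ioo 0 ρ, 0 < D φ) (hgpos : ∀ φ ∈ Ioo 0 ρ, 0 < g φ)
    (hz : ContinuousOn z (Icc 0 ρ))
    (hzneg : ∀ φ ∈ Ioo 0 ρ, z φ < 0) (hzρ : z ρ = 0)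
    (hode : ∀ φ ∈ Ioo 0 ρ, HasDerivAt z (h φ - c - D φ * g φ / z φ) φ)
    (hℓ : ℓ < 0)
    (hlim : Tendsto (fun φ => D φ * g φ / (φ - ρ)) (𝓝[<] ρ) (𝓝 ℓ)) :
    Tendsto (fun φ => (z φ - z ρ) / (φ - ρ)) (𝓝[<] ρ)
      (𝓝 ((h ρ - c + Real.sqrt ((h ρ - c) ^ 2 - 4 * ℓ)) / 2)) :=
  stmt1_general ρ hρ h D g z c ℓ hh hDpos hgpos hz hzneg hzρ hode hlim
end

section
/- Let z : [0, ρ̄] → ℝ be continuous, C¹ on (0, ρ̄), with z(φ) < 0 for φ ∈ (0, ρ̄), z(ρ̄) = 0, satisfying ż(φ) = h(φ) − c − D(φ)g(φ)/z(φ) on (0, ρ̄), with D(φ)g(φ)/(φ − ρ̄) → 0 as φ → ρ̄⁻. If c > h(ρ̄) and z is differentiable from the left at ρ̄, then ż(ρ̄) = 0. -/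
open Set Filter Topology

/-
If `m ≠ 0`, then `D g / z = (D g / (φ - ρ)) / (z / (φ - ρ)) → 0 / m = 0`, so the right-hand side of
the equation tends to `h ρ - c` and, by l'Hôpital's rule, so does the slope `z φ / (φ - ρ)`; that
gives `m = h ρ - c < 0`. But `z < 0 = z ρ` to the left of `ρ` makes every slope, hence `m`,
nonnegative.
-/

lemma nonneg_of_tendsto_slope_nhdsLT {z : ℝ → ℝ} {ρ m : ℝ}
    (hneg : ∀ᶠ φ in 𝓝[<] ρ, z φ ≤ 0)
    (hslope : Tendsto (fun φ => z φ / (φ - ρ)) (𝓝[<] ρ) (𝓝 m)) : 0 ≤ m := by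
  refine ge_of_tendsto hslope ?_
  filter_upwards [hneg, self_mem_nhdsWithin] with φ hφ hφρ
  exact div_nonneg_of_nonpos hφ (sub_nonpos.mpr (le_of_lt hφρ))

lemma tendsto_zero_of_tendsto_slope_nhdsLT {z : ℝ → ℝ} {ρ m : ℝ}
    (hslope : Tendsto (fun φ => z φ / (φ - ρ)) (𝓝[<] ρ) (𝓝 m)) :
    Tendsto z (𝓝[<] ρ) (𝓝 0) := by
  have hsub : Tendsto (fun φ : ℝ => φ - ρ) (𝓝[<] ρ) (𝓝 0) :=
    tendsto_sub_nhds_zero_iff.mpr nhdsWithin_le_nhds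
  have hprod := hslope.mul hsub
  rw [mul_zero] at hprod
  refine hprod.congr' ?_
  filter_upwards [self_mem_nhdsWithin] with φ hφ
  exact div_mul_cancel₀ _ (sub_ne_zero.mpr (ne_of_lt hφ))

lemma Filter.Tendsto.div_of_tendsto_div {α : Type*} {l : Filter α} {f z u : α → ℝ} {a m : ℝ}
    (hf : Tendsto (fun x => f x / u x) l (𝓝 a)) (hz : Tendsto (fun x => z x / u x) l (𝓝 m))
    (hm : m ≠ 0) (hu : ∀ᶠ x in l, u x ≠ 0) :
    Tendsto (fun x => f x / z x) l (𝓝 (a / m)) := by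
  refine (hf.div hz hm).congr' ?_
  filter_upwards [hu] with x hx
  rw [Pi.div_apply, div_div_div_cancel_right₀ hx]

lemma tendsto_slope_of_tendsto_deriv_nhdsLT {z z' : ℝ → ℝ} {ρ L : ℝ}
    (hderiv : ∀ᶠ φ in 𝓝[<] ρ, HasDerivAt z (z' φ) φ)
    (hz : Tendsto z (𝓝[<] ρ) (𝓝 0)) (hz' : Tendsto z' (𝓝[<] ρ) (𝓝 L)) :
    Tendsto (fun φ => z φ / (φ - ρ)) (𝓝[<] ρ) (𝓝 L) := by
  refine HasDerivAt.lhopital_zero_nhdsLT (g' := fun _ => 1) hderiv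
    (Eventually.of_forall fun φ => (hasDerivAt_id φ).sub_const ρ)
    (Eventually.of_forall fun _ => one_ne_zero) hz
    (tendsto_sub_nhds_zero_iff.mpr nhdsWithin_le_nhds) ?_
  simpa only [div_one] using hz'

theorem stmt2_general (ρ : ℝ) (hρ : 0 < ρ) (h D g z : ℝ → ℝ) (c m : ℝ)
    (hh : ContinuousOn h (Icc 0 ρ))
    (hzneg : ∀ φ ∈ Ioo 0 ρ, z φ < 0) (hzρ : z ρ = 0)
    (hode : ∀ φ ∈ Ioo 0 ρ, HasDerivAt z (h φ - c - D φ * g φ / z φ) φ)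
    (hlim : Tendsto (fun φ => D φ * g φ / (φ - ρ)) (𝓝[<] ρ) (𝓝 0))
    (hc : h ρ < c)
    (hdiff : Tendsto (fun φ => (z φ - z ρ) / (φ - ρ)) (𝓝[<] ρ) (𝓝 m)) :
    m = 0 := by
  simp only [hzρ, sub_zero] at hdiff
  have hIoo : Ioo 0 ρ ∈ 𝓝[<] ρ := Ioo_mem_nhdsLT hρ
  have hm : 0 ≤ m := nonneg_of_tendsto_slope_nhdsLT
    (eventually_of_mem hIoo fun φ hφ => (hzneg φ hφ).le) hdiff
  by_contra hm0
  have hDgz : Tendsto (fun φ => D φ * g φ / z φ) (𝓝[<] ρ) (𝓝 0) := by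
    simpa only [zero_div] using hlim.div_of_tendsto_div hdiff hm0
      (eventually_of_mem self_mem_nhdsWithin fun φ hφ => sub_ne_zero.mpr (ne_of_lt hφ))
  have hh' : Tendsto h (𝓝[<] ρ) (𝓝 (h ρ)) :=
    (hh ρ (right_mem_Icc.mpr hρ.le)).tendsto.mono_left
      (nhdsWithin_le_of_mem (mem_of_superset hIoo Ioo_subset_Icc_self))
  have hslope : Tendsto (fun φ => z φ / (φ - ρ)) (𝓝[<] ρ) (𝓝 (h ρ - c - 0)) :=
    tendsto_slope_of_tendsto_deriv_nhdsLT (eventually_of_mem hIoo hode)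
      (tendsto_zero_of_tendsto_slope_nhdsLT hdiff) ((hh'.sub_const c).sub hDgz)
  linarith [tendsto_nhds_unique hdiff hslope]

theorem stmt2 (ρ : ℝ) (hρ : 0 < ρ) (h D g z : ℝ → ℝ) (c m : ℝ)
    (hh : ContinuousOn h (Icc 0 ρ))
    (hD : ContinuousOn D (Icc 0 ρ)) (hg : ContinuousOn g (Icc 0 ρ))
    (hDpos : ∀ φ ∈ Ioo 0 ρ, 0 < D φ) (hgpos : ∀ φ ∈ Ioo 0 ρ, 0 < g φ)
    (hgρ : g ρ = 0)
    (hz : ContinuousOn z (Icc 0 ρ))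
    (hzneg : ∀ φ ∈ Ioo 0 ρ, z φ < 0) (hzρ : z ρ = 0)
    (hode : ∀ φ ∈ Ioo 0 ρ, HasDerivAt z (h φ - c - D φ * g φ / z φ) φ)
    (hlim : Tendsto (fun φ => D φ * g φ / (φ - ρ)) (𝓝[<] ρ) (𝓝 0))
    (hc : h ρ < c)
    (hdiff : Tendsto (fun φ => (z φ - z ρ) / (φ - ρ)) (𝓝[<] ρ) (𝓝 m)) :
    m = 0 :=
  stmt2_general ρ hρ h D g z c m hh hzneg hzρ hode hlim hc hdiff
end

section
/- Strict comparison of solutions for distinct speeds: let g₁ ≤ g₂ be continuous on [0, ρ̄] with g₂ > 0 on (0, ρ̄), let c₁ > c₂, and let z₁, z₂ : [0, ρ̄] → ℝ be continuous, C¹ on (0, ρ̄), negative on (0, ρ̄), with z_i(ρ̄) = 0 and ż_i(φ) = h(φ) − c_i − D(φ)g_i(φ)/z_i(φ) on (0, ρ̄) (i = 1, 2). Then z₁(φ) > z₂(φ) for every φ ∈ (0, ρ̄). -/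
open Set Filter Topology

theorem stmt6 (ρ c₁ c₂ : ℝ) (hρ : 0 < ρ) (hc : c₂ < c₁)
    (h D g₁ g₂ z₁ z₂ : ℝ → ℝ)
    (hh : ContinuousOn h (Icc 0 ρ)) (hD : ContinuousOn D (Icc 0 ρ))
    (hg₁ : ContinuousOn g₁ (Icc 0 ρ)) (hg₂ : ContinuousOn g₂ (Icc 0 ρ))
    (hle : ∀ φ ∈ Icc 0 ρ, g₁ φ ≤ g₂ φ)
    (hg₂pos : ∀ φ ∈ Ioo 0 ρ, 0 < g₂ φ)
    (hDpos : ∀ φ ∈ Ioo 0 ρ, 0 < D φ)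
    (hz₁c : ContinuousOn z₁ (Icc 0 ρ)) (hz₂c : ContinuousOn z₂ (Icc 0 ρ))
    (hz₁neg : ∀ φ ∈ Ioo 0 ρ, z₁ φ < 0) (hz₂neg : ∀ φ ∈ Ioo 0 ρ, z₂ φ < 0)
    (hz₁ρ : z₁ ρ = 0) (hz₂ρ : z₂ ρ = 0)
    (hode₁ : ∀ φ ∈ Ioo 0 ρ, HasDerivAt z₁ (h φ - c₁ - D φ * g₁ φ / z₁ φ) φ)
    (hode₂ : ∀ φ ∈ Ioo 0 ρ, HasDerivAt z₂ (h φ - c₂ - D φ * g₂ φ / z₂ φ) φ) :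
    ∀ φ ∈ Ioo 0 ρ, z₂ φ < z₁ φ := by
  intro φ₀ hφ₀
  by_contra hcon
  push_neg at hcon
  set w : ℝ → ℝ := fun t => z₁ t - z₂ t with hwdef
  have hwc : ContinuousOn w (Icc 0 ρ) := hz₁c.sub hz₂c
  have hwρ : w ρ = 0 := by simp [hwdef, hz₁ρ, hz₂ρ]
  -- key derivative estimate: wherever w ≤ 0, w has a negative derivative
  have key : ∀ x ∈ Ioo 0 ρ, w x ≤ 0 → ∃ d, d < 0 ∧ HasDerivAt w d x := by
    intro x hx hwx
    refine ⟨_, ?_, (hode₁ x hx).sub (hode₂ x hx)⟩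
    have ha := hz₁neg x hx
    have hb := hz₂neg x hx
    have hDx := hDpos x hx
    have hg2 := hg₂pos x hx
    have hgle := hle x (Ioo_subset_Icc_self hx)
    have hab : z₁ x ≤ z₂ x := sub_nonpos.mp hwx
    have hkey : D x * g₂ x / z₂ x ≤ D x * g₁ x / z₁ x := by
      have hp : 0 < -z₁ x := by linarith
      have hq : 0 < -z₂ x := by linarith
      have h1 : D x * g₁ x * (-z₂ x) ≤ D x * g₂ x * (-z₁ x) := by
        nlinarith [mul_pos hDx hg2, mul_le_mul_of_nonneg_left hgle hDx.le]
      have h2 : D x * g₁ x / -z₁ x ≤ D x * g₂ x / -z₂ x := (div_le_div_iff₀ hp hq).mpr h1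
      have e1 : D x * g₂ x / z₂ x = -(D x * g₂ x / -z₂ x) := by
        rw [div_neg, neg_neg]
      have e2 : D x * g₁ x / z₁ x = -(D x * g₁ x / -z₁ x) := by
        rw [div_neg, neg_neg]
      rw [e1, e2]
      linarith
    linarith
  -- find a point where w < 0
  obtain ⟨φ₁, hφ₁, hwφ₁⟩ : ∃ t ∈ Ioo 0 ρ, w t < 0 := by
    rcases lt_or_eq_of_le (sub_nonpos.mpr hcon : w φ₀ ≤ 0) with h0 | h0
    · exact ⟨φ₀, hφ₀, h0⟩
    · -- w φ₀ = 0; use the negative derivative at φ₀ to move strictly below 0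
      obtain ⟨d, hd, hder⟩ := key φ₀ hφ₀ (le_of_eq h0)
      have htend := hasDerivAt_iff_tendsto_slope.mp hder
      have h3 : ∀ᶠ t in 𝓝[≠] φ₀, slope w φ₀ t < 0 := htend.eventually_lt_const hd
      have h4 : ∀ᶠ t in 𝓝[>] φ₀, slope w φ₀ t < 0 :=
        h3.filter_mono (nhdsWithin_mono φ₀ fun t ht => (ne_of_lt ht).symm)
      have h5 : ∀ᶠ t in 𝓝[>] φ₀, t ∈ Ioo φ₀ ρ :=
        eventually_mem_set.mpr (Ioo_mem_nhdsGT_of_mem ⟨le_refl φ₀, hφ₀.2⟩)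
      obtain ⟨t, hts, htm⟩ := (h4.and h5).exists
      refine ⟨t, ⟨lt_trans hφ₀.1 htm.1, htm.2⟩, ?_⟩
      rw [slope_def_field] at hts
      have h6 : 0 < t - φ₀ := sub_pos.mpr htm.1
      have hw0 : w φ₀ = 0 := h0
      rcases div_neg_iff.mp hts with ⟨_, h7⟩ | ⟨h7, _⟩
      · linarith
      · linarith
  -- the first zero of w after φ₁
  set Z : Set ℝ := Icc φ₁ ρ ∩ w ⁻¹' {0} with hZdef
  have hZρ : ρ ∈ Z := ⟨⟨le_of_lt hφ₁.2, le_refl ρ⟩, hwρ⟩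
  have hZc : IsClosed Z :=
    (hwc.mono (Icc_subset_Icc hφ₁.1.le (le_refl ρ))).preimage_isClosed_of_isClosed
      isClosed_Icc isClosed_singleton
  have hbdd : BddBelow Z := ⟨φ₁, fun t ht => ht.1.1⟩
  set m := sInf Z with hmdef
  have hmZ : m ∈ Z := hZc.csInf_mem ⟨ρ, hZρ⟩ hbdd
  have hφ₁m : φ₁ < m := by
    rcases lt_or_eq_of_le hmZ.1.1 with h0 | h0
    · exact h0
    · exact absurd (h0 ▸ hmZ.2 : w φ₁ = 0) (ne_of_lt hwφ₁)
  have hmρ : m ≤ ρ := hmZ.1.2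
  -- w < 0 on [φ₁, m)
  have hneg : ∀ t ∈ Ico φ₁ m, w t < 0 := by
    intro t ht
    rcases lt_trichotomy (w t) 0 with h0 | h0 | h0
    · exact h0
    · exact absurd (csInf_le hbdd ⟨⟨ht.1, le_trans ht.2.le hmρ⟩, h0⟩) (not_le.mpr ht.2)
    · obtain ⟨s, hs, hws⟩ := intermediate_value_Icc ht.1
        (hwc.mono (Icc_subset_Icc hφ₁.1.le (le_trans ht.2.le hmρ)))
        (⟨hwφ₁.le, h0.le⟩ : (0:ℝ) ∈ Icc (w φ₁) (w t))
      have : m ≤ s := csInf_le hbdd ⟨⟨hs.1, le_trans hs.2 (le_trans ht.2.le hmρ)⟩, hws⟩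
      linarith [ht.2, hs.2]
  -- w is strictly decreasing on [φ₁, m]
  have hsub : Icc φ₁ m ⊆ Icc 0 ρ := Icc_subset_Icc hφ₁.1.le hmρ
  have anti : StrictAntiOn w (Icc φ₁ m) := by
    apply strictAntiOn_of_deriv_neg (convex_Icc φ₁ m) (hwc.mono hsub)
    intro x hx
    rw [interior_Icc] at hx
    have hx' : x ∈ Ioo 0 ρ := ⟨lt_trans hφ₁.1 hx.1, lt_of_lt_of_le hx.2 hmρ⟩
    obtain ⟨d, hd, hder⟩ := key x hx' (hneg x ⟨hx.1.le, hx.2⟩).le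
    rw [hder.deriv]; exact hd
  have : w m < w φ₁ :=
    anti ⟨le_refl φ₁, hφ₁m.le⟩ ⟨hφ₁m.le, le_refl m⟩ hφ₁m
  rw [hmZ.2] at this
  linarith
end

section
/- Nonstrict comparison for equal speeds via approximation: under the hypotheses of the strict comparison lemma but with c₁ = c₂, if for each n the first-order problem with speed c₁ + 1/n and source g₁ has a solution ζₙ (continuous on [0, ρ̄], C¹ and negative on (0, ρ̄), ζₙ(ρ̄) = 0), and ζₙ converges pointwise to z₁, then z₁(φ) ≥ z₂(φ) for all φ ∈ [0, ρ̄]. -/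
open Set Filter Topology


theorem aux_cmp (ρ c₁ c₂ : ℝ) (hρ : 0 < ρ) (hc : c₁ < c₂) (h D g₁ g₂ y z : ℝ → ℝ)
    (hle : ∀ φ ∈ Icc 0 ρ, g₁ φ ≤ g₂ φ)
    (hg₂pos : ∀ φ ∈ Ioo 0 ρ, 0 < g₂ φ)
    (hDpos : ∀ φ ∈ Ioo 0 ρ, 0 < D φ)
    (hyc : ContinuousOn y (Icc 0 ρ)) (hzc : ContinuousOn z (Icc 0 ρ))
    (hyneg : ∀ φ ∈ Ioo 0 ρ, y φ < 0) (hzneg : ∀ φ ∈ Ioo 0 ρ, z φ < 0)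
    (hyρ : y ρ = 0) (hzρ : z ρ = 0)
    (hodey : ∀ φ ∈ Ioo 0 ρ, HasDerivAt y (h φ - c₂ - D φ * g₁ φ / y φ) φ)
    (hodez : ∀ φ ∈ Ioo 0 ρ, HasDerivAt z (h φ - c₁ - D φ * g₂ φ / z φ) φ) :
    ∀ φ ∈ Ioo 0 ρ, z φ ≤ y φ := by
  intro a ha
  by_contra hcon
  push_neg at hcon
  set w : ℝ → ℝ := fun φ => y φ - z φ with hw
  have hwa : w a < 0 := sub_neg.2 hcon
  have hwρ : w ρ = 0 := by simp [hw, hyρ, hzρ]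
  have hwc : ContinuousOn w (Icc 0 ρ) := hyc.sub hzc
  -- derivative bound whenever w ≤ 0
  have hderiv : ∀ φ ∈ Ioo 0 ρ, w φ ≤ 0 →
      ∃ d, HasDerivAt w d φ ∧ d ≤ c₁ - c₂ := by
    intro φ hφ hwle
    have hyφ := hyneg φ hφ
    have hzφ := hzneg φ hφ
    refine ⟨_, (hodey φ hφ).sub (hodez φ hφ), ?_⟩
    have key : D φ * g₂ φ / z φ ≤ D φ * g₁ φ / y φ := by
      have hyz : y φ ≤ z φ := by simpa [hw, sub_nonpos] using hwle
      have h1 : g₂ φ * y φ ≤ g₂ φ * z φ :=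
        mul_le_mul_of_nonneg_left hyz (hg₂pos φ hφ).le
      have h2 : g₂ φ * z φ ≤ g₁ φ * z φ :=
        mul_le_mul_of_nonpos_right (hle φ (Ioo_subset_Icc_self hφ)) hzφ.le
      have hnum : D φ * g₂ φ * y φ - D φ * g₁ φ * z φ ≤ 0 := by
        have h3 : g₂ φ * y φ - g₁ φ * z φ ≤ 0 := by linarith
        nlinarith [mul_nonpos_of_nonneg_of_nonpos (hDpos φ hφ).le h3]
      have hden : 0 < z φ * y φ := mul_pos_of_neg_of_neg hzφ hyφ
      have heq : D φ * g₂ φ / z φ - D φ * g₁ φ / y φ =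
          (D φ * g₂ φ * y φ - D φ * g₁ φ * z φ) / (z φ * y φ) := by
        field_simp [hzφ.ne, hyφ.ne]
      have hfrac : (D φ * g₂ φ * y φ - D φ * g₁ φ * z φ) / (z φ * y φ) ≤ 0 :=
        div_nonpos_of_nonpos_of_nonneg hnum hden.le
      linarith [heq ▸ hfrac]
    linarith [key]
  -- w ≤ 0 on [a, ρ]
  have hwle : ∀ φ ∈ Icc a ρ, w φ ≤ 0 := by
    by_contra hcon2
    push_neg at hcon2
    obtain ⟨φ₁, hφ₁, hwφ₁⟩ := hcon2
    have hφ₁ρ : φ₁ < ρ := lt_of_le_of_ne hφ₁.2 (by rintro rfl; linarith)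
    have haφ₁ : a < φ₁ := lt_of_le_of_ne hφ₁.1 (by rintro rfl; linarith)
    set S : Set ℝ := {s ∈ Icc a φ₁ | w s ≤ 0} with hS
    have hSne : S.Nonempty := ⟨a, ⟨le_refl a, haφ₁.le⟩, hwa.le⟩
    have hIccsub : Icc a φ₁ ⊆ Icc 0 ρ := Icc_subset_Icc ha.1.le hφ₁ρ.le
    have hScl : IsClosed S :=
      ContinuousOn.preimage_isClosed_of_isClosed (hwc.mono hIccsub) isClosed_Icc isClosed_Iic
    have hSbdd : BddAbove S := ⟨φ₁, fun x hx => hx.1.2⟩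
    set b := sSup S with hb
    have hbS : b ∈ S := (isCompact_Icc.of_isClosed_subset hScl (fun x hx => hx.1)).sSup_mem hSne
    have hbφ₁ : b < φ₁ :=
      lt_of_le_of_ne hbS.1.2 (fun he => absurd (he ▸ hbS.2) (not_le.2 hwφ₁))
    have hbpos : ∀ x ∈ Ioc b φ₁, 0 < w x := by
      intro x hx
      by_contra hx0
      push_neg at hx0
      have : x ∈ S := ⟨⟨hbS.1.1.trans hx.1.le, hx.2⟩, hx0⟩
      exact absurd (le_csSup hSbdd this) (not_le.2 hx.1)
    have hbIoo : b ∈ Ioo 0 ρ :=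
      ⟨lt_of_lt_of_le ha.1 hbS.1.1, lt_of_le_of_lt hbS.1.2 hφ₁ρ⟩
    have hNB : (𝓝[Ioc b φ₁] b).NeBot := by
      rw [← mem_closure_iff_nhdsWithin_neBot, closure_Ioc hbφ₁.ne]
      exact ⟨le_refl b, hbφ₁.le⟩
    -- w b = 0
    have hwb : w b = 0 := by
      refine le_antisymm hbS.2 ?_
      have hcw : Tendsto w (𝓝[Ioc b φ₁] b) (𝓝 (w b)) :=
        (hwc.continuousWithinAt (hIccsub ⟨hbS.1.1, hbS.1.2⟩)).mono
          (fun x hx => hIccsub ⟨hbS.1.1.trans hx.1.le, hx.2⟩)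
      refine ge_of_tendsto hcw ?_
      filter_upwards [self_mem_nhdsWithin] with x hx
      exact (hbpos x hx).le
    -- negative derivative at b gives points just right of b with w < 0
    obtain ⟨d, hd, hdle⟩ := hderiv b hbIoo (le_of_eq hwb)
    have hslope : Tendsto (slope w b) (𝓝[≠] b) (𝓝 d) :=
      hasDerivAt_iff_tendsto_slope.1 hd
    have hdneg : d < 0 := by linarith
    have hev : ∀ᶠ x in 𝓝[≠] b, slope w b x < 0 :=
      hslope.eventually (eventually_lt_nhds hdneg)
    have hle' : 𝓝[Ioc b φ₁] b ≤ 𝓝[≠] b :=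
      nhdsWithin_mono b (fun x hx => ne_of_gt hx.1)
    have : ∀ᶠ x in 𝓝[Ioc b φ₁] b, slope w b x < 0 ∧ x ∈ Ioc b φ₁ :=
      (hev.filter_mono hle').and self_mem_nhdsWithin
    obtain ⟨x, hx1, hx2⟩ := this.exists
    have hxb : 0 < x - b := sub_pos.2 hx2.1
    rw [slope_def_field] at hx1
    have h4 : w x - w b < 0 := by
      rcases div_neg_iff.1 hx1 with ⟨h5, h6⟩ | ⟨h5, h6⟩
      · linarith
      · linarith
    have hwxneg : w x < 0 := by linarith
    exact absurd hwxneg (not_lt.2 (hbpos x hx2).le)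
  -- now use the uniform derivative bound on [a, ρ]
  set ε := c₂ - c₁ with hε
  have hεpos : 0 < ε := sub_pos.2 hc
  set v : ℝ → ℝ := fun x => w x + ε * x with hv
  have hIccsub2 : Icc a ρ ⊆ Icc 0 ρ := Icc_subset_Icc ha.1.le le_rfl
  have hvc : ContinuousOn v (Icc a ρ) :=
    (hwc.mono hIccsub2).add (continuousOn_const.mul continuousOn_id)
  have hvderiv : ∀ x ∈ Ioo a ρ, ∃ d', HasDerivAt v d' x ∧ d' ≤ 0 := by
    intro x hx
    have hxI : x ∈ Ioo 0 ρ := ⟨ha.1.trans hx.1, hx.2⟩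
    obtain ⟨d, hd, hdle⟩ := hderiv x hxI (hwle x ⟨hx.1.le, hx.2.le⟩)
    have hmul : HasDerivAt (fun s : ℝ => ε * s) ε x := by
      simpa using (hasDerivAt_id x).const_mul ε
    refine ⟨d + ε, hd.add hmul, by linarith⟩
  have hanti : AntitoneOn v (Icc a ρ) := by
    apply antitoneOn_of_deriv_nonpos (convex_Icc a ρ) hvc
    · intro x hx
      rw [interior_Icc] at hx
      obtain ⟨d', hd', _⟩ := hvderiv x hx
      exact hd'.differentiableAt.differentiableWithinAt
    · intro x hx
      rw [interior_Icc] at hx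
      obtain ⟨d', hd', hd'le⟩ := hvderiv x hx
      rw [hd'.deriv]; exact hd'le
  have := hanti (left_mem_Icc.2 ha.2.le) (right_mem_Icc.2 ha.2.le) ha.2.le
  have hwaρ : w ρ + ε * ρ ≤ w a + ε * a := this
  nlinarith [mul_pos hεpos (sub_pos.2 ha.2)]

theorem stmt7 (ρ c₁ : ℝ) (hρ : 0 < ρ) (h D g₁ g₂ z₁ z₂ : ℝ → ℝ)
    (hh : ContinuousOn h (Icc 0 ρ)) (hD : ContinuousOn D (Icc 0 ρ))
    (hg₁ : ContinuousOn g₁ (Icc 0 ρ)) (hg₂ : ContinuousOn g₂ (Icc 0 ρ))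
    (hle : ∀ φ ∈ Icc 0 ρ, g₁ φ ≤ g₂ φ)
    (hg₂pos : ∀ φ ∈ Ioo 0 ρ, 0 < g₂ φ)
    (hDpos : ∀ φ ∈ Ioo 0 ρ, 0 < D φ)
    (hz₁c : ContinuousOn z₁ (Icc 0 ρ)) (hz₂c : ContinuousOn z₂ (Icc 0 ρ))
    (hz₁neg : ∀ φ ∈ Ioo 0 ρ, z₁ φ < 0) (hz₂neg : ∀ φ ∈ Ioo 0 ρ, z₂ φ < 0)
    (hz₁ρ : z₁ ρ = 0) (hz₂ρ : z₂ ρ = 0)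
    (hode₁ : ∀ φ ∈ Ioo 0 ρ, HasDerivAt z₁ (h φ - c₁ - D φ * g₁ φ / z₁ φ) φ)
    (hode₂ : ∀ φ ∈ Ioo 0 ρ, HasDerivAt z₂ (h φ - c₁ - D φ * g₂ φ / z₂ φ) φ)
    (ζ : ℕ → ℝ → ℝ)
    (hζ : ∀ n : ℕ, 0 < n →
      ContinuousOn (ζ n) (Icc 0 ρ) ∧ (∀ φ ∈ Ioo 0 ρ, ζ n φ < 0) ∧ ζ n ρ = 0 ∧
      ∀ φ ∈ Ioo 0 ρ,
        HasDerivAt (ζ n) (h φ - (c₁ + 1 / (n : ℝ)) - D φ * g₁ φ / ζ n φ) φ)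
    (hconv : ∀ φ ∈ Icc 0 ρ, Tendsto (fun n => ζ n φ) atTop (𝓝 (z₁ φ))) :
    ∀ φ ∈ Icc 0 ρ, z₂ φ ≤ z₁ φ := by
  -- interior comparison
  have hint : ∀ φ ∈ Ioo 0 ρ, z₂ φ ≤ z₁ φ := by
    intro φ hφ
    refine ge_of_tendsto (hconv φ (Ioo_subset_Icc_self hφ)) ?_
    filter_upwards [eventually_gt_atTop 0] with n hn
    obtain ⟨hc, hneg, hrho, hode⟩ := hζ n hn
    have hn' : (0 : ℝ) < 1 / (n : ℝ) := by positivity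
    exact aux_cmp ρ c₁ (c₁ + 1 / (n : ℝ)) hρ (by linarith) h D g₁ g₂ (ζ n) z₂
      hle hg₂pos hDpos hc hz₂c hneg hz₂neg hrho hz₂ρ hode hode₂ φ hφ
  intro φ hφ
  rcases eq_or_lt_of_le hφ.1 with h0 | h0
  · -- φ = 0 : by continuity from the right
    rw [← h0]
    have h0I : (0 : ℝ) ∈ Icc 0 ρ := ⟨le_rfl, hρ.le⟩
    have hNB : (𝓝[Ioo (0:ℝ) ρ] 0).NeBot := by
      rw [← mem_closure_iff_nhdsWithin_neBot, closure_Ioo hρ.ne]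
      exact ⟨le_rfl, hρ.le⟩
    have h1 : Tendsto z₁ (𝓝[Ioo (0:ℝ) ρ] 0) (𝓝 (z₁ 0)) :=
      (hz₁c.continuousWithinAt h0I).mono Ioo_subset_Icc_self
    have h2 : Tendsto z₂ (𝓝[Ioo (0:ℝ) ρ] 0) (𝓝 (z₂ 0)) :=
      (hz₂c.continuousWithinAt h0I).mono Ioo_subset_Icc_self
    refine le_of_tendsto_of_tendsto h2 h1 ?_
    filter_upwards [self_mem_nhdsWithin] with x hx
    exact hint x hx
  rcases eq_or_lt_of_le hφ.2 with h1 | h1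
  · subst h1; rw [hz₁ρ, hz₂ρ]
  · exact hint φ ⟨h0, h1⟩
end

section
/- Monotone limit of solutions solves the limit problem: let zₙ : [0, ρ̄] → ℝ be an increasing (in n) sequence of continuous functions, C¹ and negative on (0, ρ̄), solving żₙ(φ) = h(φ) − c − D(φ)gₙ(φ)/zₙ(φ), with zₙ(ρ̄) = 0, where gₙ ↓ g₀ uniformly on [0, ρ̄] and there is z₀ with zₙ ≤ z₀ < 0 on each compact subinterval [a, b] ⊂ (0, ρ̄). Then the pointwise limit z̃ = lim zₙ is C¹ on (0, ρ̄) and satisfies ż̃(φ) = h(φ) − c − D(φ)g₀(φ)/z̃(φ) there. -/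
/-!
Along a solution the square satisfies `(zₙ²)' = 2 zₙ (h - c) - 2 D gₙ`, which has no singular
term, so on every compact subinterval of `(0, ρ)` the squares `zₙ²` are Lipschitz with one common
constant; hence so is `z̃²`, and `z̃ = -√(z̃²)` is continuous. Dini's theorem then upgrades the
monotone convergence `zₙ → z̃` to locally uniform convergence; as `z̃` stays away from `0`, the
right-hand sides converge locally uniformly too, and the derivative of the limit is the limit
of the derivatives.
-/

open Set Filter Topology

theorem LipschitzOnWith.of_tendsto {ι α β : Type*} [PseudoEMetricSpace α] [PseudoEMetricSpace β]
    {l : Filter ι} [l.NeBot] {K : NNReal} {s : Set α} {f : ι → α → β} {g : α → β}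
    (hf : ∀ᶠ i in l, LipschitzOnWith K (f i) s)
    (hg : ∀ x ∈ s, Tendsto (f · x) l (𝓝 (g x))) :
    LipschitzOnWith K g s := by
  simp only [lipschitzOnWith_iff_restrict] at hf ⊢
  exact (isClosed_setOfPred_lipschitzWith K).mem_of_tendsto
    (tendsto_pi_nhds.2 fun x => hg x x.2) hf

theorem ContinuousOn.of_sq_of_nonpos {α : Type*} [TopologicalSpace α] {s : Set α} {f : α → ℝ}
    (hf : ContinuousOn (fun x => f x ^ 2) s) (hf_nonpos : ∀ x ∈ s, f x ≤ 0) :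
    ContinuousOn f s :=
  (Real.continuous_sqrt.comp_continuousOn hf).neg.congr fun x hx => by
    simp [Real.sqrt_sq_eq_abs, abs_of_nonpos (hf_nonpos x hx)]

theorem TendstoUniformlyOn.exists_eventually_norm_le {ι α E : Type*} [TopologicalSpace α]
    [SeminormedAddCommGroup E] {l : Filter ι} {K : Set α} {F : ι → α → E} {f : α → E}
    (hF : TendstoUniformlyOn F f l K) (hK : IsCompact K) (hf : ContinuousOn f K) :
    ∃ M, ∀ᶠ i in l, ∀ x ∈ K, ‖F i x‖ ≤ M := by
  obtain ⟨M, hM⟩ := hK.exists_bound_of_continuousOn hf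
  refine ⟨M + 1, (Metric.tendstoUniformlyOn_iff.1 hF 1 one_pos).mono fun i hi x hx => ?_⟩
  calc ‖F i x‖ ≤ ‖f x‖ + dist (f x) (F i x) := by
        rw [dist_comm, dist_eq_norm]; exact norm_le_norm_add_norm_sub' _ _
    _ ≤ M + 1 := add_le_add (hM x hx) (hi x hx).le

theorem tendstoLocallyUniformlyOn_const {ι α β : Type*} [TopologicalSpace α] [UniformSpace β]
    {l : Filter ι} {s : Set α} (f : α → β) :
    TendstoLocallyUniformlyOn (fun _ => f) f l s :=
  fun _ hu _ _ => ⟨univ, univ_mem, .of_forall fun _ _ _ => refl_mem_uniformity hu⟩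

theorem lipschitzOnWith_sq_of_hasDerivAt_sub_div {K : Set ℝ} (hK : Convex ℝ K)
    {a b G z : ℝ → ℝ} {A B N M : ℝ}
    (hz : ∀ t ∈ K, HasDerivAt z (a t - b t * G t / z t) t) (hz₀ : ∀ t ∈ K, z t ≠ 0)
    (ha : ∀ t ∈ K, ‖a t‖ ≤ A) (hb : ∀ t ∈ K, ‖b t‖ ≤ B) (hG : ∀ t ∈ K, ‖G t‖ ≤ N)
    (hzM : ∀ t ∈ K, ‖z t‖ ≤ M) :
    LipschitzOnWith (2 * (M * A + B * N)).toNNReal (fun t => z t ^ 2) K := by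
  refine hK.lipschitzOnWith_of_nnnorm_hasDerivWithin_le
    (f' := fun t => 2 * z t * a t - 2 * (b t * G t)) (fun t ht => ?_) fun t ht => ?_
  · convert ((hz t ht).fun_pow 2).hasDerivWithinAt using 1
    field_simp [hz₀ t ht]
    ring
  · refine NNReal.le_toNNReal_of_coe_le ?_
    have hM : 0 ≤ M := (norm_nonneg _).trans (hzM t ht)
    have hB : 0 ≤ B := (norm_nonneg _).trans (hb t ht)
    calc ‖2 * z t * a t - 2 * (b t * G t)‖
        ≤ 2 * (‖z t‖ * ‖a t‖) + 2 * (‖b t‖ * ‖G t‖) := by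
          refine (norm_sub_le _ _).trans_eq ?_
          simp only [norm_mul, Real.norm_two, mul_assoc]
      _ ≤ 2 * (M * A + B * N) := by
          rw [mul_add]
          gcongr
          exacts [hzM t ht, ha t ht, hb t ht, hG t ht]

theorem continuousOn_of_tendsto_of_hasDerivAt_sub_div {U : Set ℝ} (hU : IsOpen U)
    {a b g Z : ℝ → ℝ} {G z : ℕ → ℝ → ℝ}
    (ha : ContinuousOn a U) (hb : ContinuousOn b U)
    (hG : TendstoLocallyUniformlyOn G g atTop U) (hg : ContinuousOn g U)
    (hz : ∀ n, ∀ t ∈ U, HasDerivAt (z n) (a t - b t * G n t / z n t) t)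
    (hz_neg : ∀ n, ∀ t ∈ U, z n t < 0) (hz_mono : ∀ t ∈ U, Monotone (z · t))
    (hZ : ∀ t ∈ U, Tendsto (z · t) atTop (𝓝 (Z t))) :
    ContinuousOn Z U := by
  intro x hx
  obtain ⟨ε, hε, hball⟩ := Metric.nhds_basis_closedBall.mem_iff.1 (hU.mem_nhds hx)
  suffices ContinuousOn Z (Metric.closedBall x ε) from
    (this.continuousAt (Metric.closedBall_mem_nhds x hε)).continuousWithinAt
  have hK := isCompact_closedBall x ε
  obtain ⟨A, hA⟩ := hK.exists_bound_of_continuousOn (ha.mono hball)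
  obtain ⟨B, hB⟩ := hK.exists_bound_of_continuousOn (hb.mono hball)
  obtain ⟨N, hN⟩ := ((tendstoLocallyUniformlyOn_iff_tendstoUniformlyOn_of_compact hK).1
    (hG.mono hball)).exists_eventually_norm_le hK (hg.mono hball)
  obtain ⟨M, hM⟩ := hK.exists_bound_of_continuousOn
    fun t ht => (hz 0 t (hball ht)).continuousAt.continuousWithinAt
  have hz_le (n : ℕ) (t : ℝ) (ht : t ∈ Metric.closedBall x ε) : ‖z n t‖ ≤ M :=
    calc ‖z n t‖ ≤ ‖z 0 t‖ :=
          abs_le_abs_of_nonpos (hz_neg n t (hball ht)).le (hz_mono t (hball ht) n.zero_le)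
      _ ≤ M := hM t ht
  have hsq : LipschitzOnWith _ (fun t => Z t ^ 2) (Metric.closedBall x ε) :=
    .of_tendsto (hN.mono fun n hn => lipschitzOnWith_sq_of_hasDerivAt_sub_div
        (convex_closedBall x ε) (fun t ht => hz n t (hball ht))
        (fun t ht => (hz_neg n t (hball ht)).ne) hA hB hn (hz_le n))
      fun t ht => (hZ t (hball ht)).pow 2
  exact hsq.continuousOn.of_sq_of_nonpos fun t ht =>
    le_of_tendsto' (hZ t (hball ht)) fun n => (hz_neg n t (hball ht)).le

theorem stmt8_general (ρ c : ℝ) (h D g₀ : ℝ → ℝ) (g : ℕ → ℝ → ℝ)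
    (z : ℕ → ℝ → ℝ) (z₀ ztilde : ℝ → ℝ)
    (hh : ContinuousOn h (Icc 0 ρ)) (hD : ContinuousOn D (Icc 0 ρ))
    (hg₀ : ContinuousOn g₀ (Icc 0 ρ))
    (hgunif : TendstoUniformlyOn g g₀ atTop (Icc 0 ρ))
    (hzneg : ∀ n, ∀ φ ∈ Ioo 0 ρ, z n φ < 0)
    (hode : ∀ n, ∀ φ ∈ Ioo 0 ρ,
      HasDerivAt (z n) (h φ - c - D φ * g n φ / z n φ) φ)
    (hmono : ∀ φ ∈ Icc 0 ρ, Monotone (fun n => z n φ))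
    (hbound : ∀ n, ∀ φ ∈ Ioo 0 ρ, z n φ ≤ z₀ φ ∧ z₀ φ < 0)
    (hlim : ∀ φ ∈ Icc 0 ρ, Tendsto (fun n => z n φ) atTop (𝓝 (ztilde φ))) :
    (∀ φ ∈ Ioo 0 ρ, HasDerivAt ztilde (h φ - c - D φ * g₀ φ / ztilde φ) φ) ∧
    ContinuousOn (fun φ => h φ - c - D φ * g₀ φ / ztilde φ) (Ioo 0 ρ) := by
  have hU : Ioo 0 ρ ⊆ Icc 0 ρ := Ioo_subset_Icc_self
  have hzt_neg (φ : ℝ) (hφ : φ ∈ Ioo 0 ρ) : ztilde φ < 0 :=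
    (le_of_tendsto' (hlim φ (hU hφ)) fun n => (hbound n φ hφ).1).trans_lt (hbound 0 φ hφ).2
  have hg_loc : TendstoLocallyUniformlyOn g g₀ atTop (Ioo 0 ρ) :=
    (hgunif.mono hU).tendstoLocallyUniformlyOn
  have hzt_cont : ContinuousOn ztilde (Ioo 0 ρ) :=
    continuousOn_of_tendsto_of_hasDerivAt_sub_div isOpen_Ioo ((hh.mono hU).sub continuousOn_const)
      (hD.mono hU) hg_loc (hg₀.mono hU) hode hzneg (fun φ hφ => hmono φ (hU hφ))
      fun φ hφ => hlim φ (hU hφ)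
  have hz_loc : TendstoLocallyUniformlyOn z ztilde atTop (Ioo 0 ρ) :=
    Monotone.tendstoLocallyUniformlyOn_of_forall_tendsto
      (fun n φ hφ => (hode n φ hφ).continuousAt.continuousWithinAt)
      (fun φ hφ => hmono φ (hU hφ)) hzt_cont fun φ hφ => hlim φ (hU hφ)
  have hDg_cont : ContinuousOn (fun φ => D φ * g₀ φ) (Ioo 0 ρ) := (hD.mono hU).mul (hg₀.mono hU)
  have hF_loc : TendstoLocallyUniformlyOn (fun n φ => h φ - c - D φ * g n φ / z n φ)
      (fun φ => h φ - c - D φ * g₀ φ / ztilde φ) atTop (Ioo 0 ρ) :=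
    (tendstoLocallyUniformlyOn_const _).fun_sub
      (((tendstoLocallyUniformlyOn_const D).fun_mul₀ hg_loc (hD.mono hU) (hg₀.mono hU)).fun_div₀
        hz_loc hDg_cont hzt_cont fun φ hφ => (hzt_neg φ hφ).ne)
  exact ⟨fun φ hφ => hasDerivAt_of_tendstoLocallyUniformlyOn isOpen_Ioo hF_loc
      (.of_forall hode) (fun φ hφ => hlim φ (hU hφ)) hφ,
    ((hh.mono hU).sub continuousOn_const).sub (hDg_cont.div hzt_cont fun φ hφ => (hzt_neg φ hφ).ne)⟩

theorem stmt8 (ρ c : ℝ) (hρ : 0 < ρ) (h D g₀ : ℝ → ℝ) (g : ℕ → ℝ → ℝ)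
    (z : ℕ → ℝ → ℝ) (z₀ ztilde : ℝ → ℝ)
    (hh : ContinuousOn h (Icc 0 ρ)) (hD : ContinuousOn D (Icc 0 ρ))
    (hDpos : ∀ φ ∈ Ioo 0 ρ, 0 < D φ)
    (hgcont : ∀ n, ContinuousOn (g n) (Icc 0 ρ))
    (hg₀ : ContinuousOn g₀ (Icc 0 ρ))
    (hganti : ∀ φ ∈ Icc 0 ρ, Antitone (fun n => g n φ))
    (hgunif : TendstoUniformlyOn g g₀ atTop (Icc 0 ρ))
    (hzcont : ∀ n, ContinuousOn (z n) (Icc 0 ρ))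
    (hzneg : ∀ n, ∀ φ ∈ Ioo 0 ρ, z n φ < 0)
    (hzρ : ∀ n, z n ρ = 0)
    (hode : ∀ n, ∀ φ ∈ Ioo 0 ρ,
      HasDerivAt (z n) (h φ - c - D φ * g n φ / z n φ) φ)
    (hmono : ∀ φ ∈ Icc 0 ρ, Monotone (fun n => z n φ))
    (hbound : ∀ n, ∀ φ ∈ Ioo 0 ρ, z n φ ≤ z₀ φ ∧ z₀ φ < 0)
    (hlim : ∀ φ ∈ Icc 0 ρ, Tendsto (fun n => z n φ) atTop (𝓝 (ztilde φ))) :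
    (∀ φ ∈ Ioo 0 ρ, HasDerivAt ztilde (h φ - c - D φ * g₀ φ / ztilde φ) φ) ∧
    ContinuousOn (fun φ => h φ - c - D φ * g₀ φ / ztilde φ) (Ioo 0 ρ) :=
  stmt8_general ρ c h D g₀ g z z₀ ztilde hh hD hg₀ hgunif hzneg hode hmono hbound hlim
end

section
/- If z is continuous on [0, ρ̄], C¹ on (0, ρ̄), z < 0 on (0, ρ̄), z(ρ̄) = 0, and ż(φ) = h(φ) − c − D(φ)g(φ)/z(φ) with D, g > 0 on (0, ρ̄), then ż(φ) > h(φ) − c for all φ ∈ (0, ρ̄); consequently, if c < h(ρ̄), then there exist σ > 0 and η > 0 such that z(φ) < σ(φ − ρ̄) for all φ ∈ (ρ̄ − η, ρ̄). -/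
open Set Filter Topology

theorem stmt11 (ρ c : ℝ) (hρ : 0 < ρ) (h D g z : ℝ → ℝ)
    (hh : ContinuousOn h (Icc 0 ρ)) (hD : ContinuousOn D (Icc 0 ρ))
    (hg : ContinuousOn g (Icc 0 ρ))
    (hDpos : ∀ φ ∈ Ioo 0 ρ, 0 < D φ) (hgpos : ∀ φ ∈ Ioo 0 ρ, 0 < g φ)
    (hz : ContinuousOn z (Icc 0 ρ))
    (hzneg : ∀ φ ∈ Ioo 0 ρ, z φ < 0) (hzρ : z ρ = 0)
    (hode : ∀ φ ∈ Ioo 0 ρ, HasDerivAt z (h φ - c - D φ * g φ / z φ) φ) :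
    (∀ φ ∈ Ioo 0 ρ, h φ - c < deriv z φ) ∧
    (c < h ρ → ∃ σ > 0, ∃ η > 0, ∀ φ ∈ Ioo (ρ - η) ρ, z φ < σ * (φ - ρ)) := by
  have key : ∀ φ ∈ Ioo 0 ρ, 0 < -(D φ * g φ / z φ) := by
    intro φ hφ
    have hnum : 0 < D φ * g φ := mul_pos (hDpos φ hφ) (hgpos φ hφ)
    have := div_neg_of_pos_of_neg hnum (hzneg φ hφ)
    linarith
  constructor
  · intro φ hφ
    rw [(hode φ hφ).deriv]
    have := key φ hφ
    linarith
  · intro hc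
    set σ := (h ρ - c) / 2 with hσdef
    have hσpos : 0 < σ := by rw [hσdef]; linarith
    -- h is continuous within Ioo 0 ρ at ρ
    have hcw : Tendsto h (𝓝[Ioo 0 ρ] ρ) (𝓝 (h ρ)) := by
      have : ContinuousWithinAt h (Icc 0 ρ) ρ := hh ρ ⟨le_of_lt hρ, le_refl ρ⟩
      exact this.tendsto.mono_left (nhdsWithin_mono ρ Ioo_subset_Icc_self)
    have hev : ∀ᶠ φ in 𝓝[Ioo 0 ρ] ρ, σ < h φ - c := by
      have : ∀ᶠ φ in 𝓝[Ioo 0 ρ] ρ, h φ ∈ Ioi (c + σ) := by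
        apply hcw (Ioi_mem_nhds ?_)
        rw [hσdef]; linarith
      filter_upwards [this] with φ hφ
      simp only [mem_Ioi] at hφ; linarith
    rw [eventually_nhdsWithin_iff, Metric.eventually_nhds_iff] at hev
    obtain ⟨ε, hεpos, hball⟩ := hev
    refine ⟨σ, hσpos, min ε ρ, lt_min hεpos hρ, ?_⟩
    intro φ hφ
    obtain ⟨hφ1, hφ2⟩ := hφ
    have hφIoo : φ ∈ Ioo 0 ρ := by
      constructor
      · have h0 : min ε ρ ≤ ρ := min_le_right ε ρ
        linarith
      · exact hφ2
    -- every ξ ∈ (φ, ρ) is within ε of ρ and in Ioo 0 ρ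
    have hξprop : ∀ ξ ∈ Ioo φ ρ, σ < h ξ - c := by
      intro ξ hξ
      have hξIoo : ξ ∈ Ioo 0 ρ := ⟨lt_trans hφIoo.1 hξ.1, hξ.2⟩
      apply hball ?_ hξIoo
      have : ρ - ε ≤ ρ - min ε ρ := by
        have := min_le_left ε ρ; linarith
      have h1 : ρ - ε < ξ := by linarith [hξ.1, hφ1]
      rw [Real.dist_eq, abs_lt]
      constructor <;> linarith [hξ.2]
    -- MVT on [φ, ρ]
    obtain ⟨ξ, hξmem, hξeq⟩ := exists_hasDerivAt_eq_slope z
      (fun x => h x - c - D x * g x / z x) hφIoo.2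
      (hz.mono (Icc_subset_Icc (le_of_lt hφIoo.1) le_rfl))
      (fun x hx => hode x ⟨lt_trans hφIoo.1 hx.1, hx.2⟩)
    have hξIoo : ξ ∈ Ioo 0 ρ := ⟨lt_trans hφIoo.1 hξmem.1, hξmem.2⟩
    have h1 : σ < (z ρ - z φ) / (ρ - φ) := by
      rw [← hξeq]
      have := key ξ hξIoo
      have := hξprop ξ hξmem
      linarith
    rw [hzρ] at h1
    have hd : 0 < ρ - φ := by linarith [hφIoo.2]
    have := (lt_div_iff₀ hd).mp h1
    nlinarith
end

section
/- Lower-solution verification in the sublinear case: with g(ρ) ≥ L(ρ̄−ρ)^α on [ρ̄/2, ρ̄] (L > 0, α ∈ (0,1)), c ≥ h(ρ̄), β ∈ ((α+1)/2, 1), and setting h̄ = min_{[ρ̄/2,ρ̄]}(h−c), −σ² = min_{[ρ̄/2,ρ̄]} Ḋ, M = max_{[ρ̄/2,ρ̄]} D, there exists k > 0 such that for all large n the function ωₙ(φ) = −kD(φ)(ρ̄ − 1/n − φ)^β satisfies ω̇ₙ(φ) < h(φ) − c − D(φ)g(φ)/ωₙ(φ) for all φ ∈ [ρ̄/2, ρ̄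 − 1/n) with ωₙ(φ) < 0. -/
open Set Filter Topology

theorem stmt15 (ρ c L α β : ℝ) (hρ : 0 < ρ) (hL : 0 < L)
    (hα : α ∈ Ioo (0 : ℝ) 1) (hβ : β ∈ Ioo ((α + 1) / 2) 1)
    (h D D' g : ℝ → ℝ)
    (hh : ContinuousOn h (Icc 0 ρ)) (hg : ContinuousOn g (Icc 0 ρ))
    (hD' : ∀ φ ∈ Icc 0 ρ, HasDerivAt D (D' φ) φ)
    (hD'c : ContinuousOn D' (Icc 0 ρ))
    (hDpos : ∀ φ ∈ Ioo 0 ρ, 0 < D φ)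
    (hgL : ∀ φ ∈ Icc (ρ / 2) ρ, L * (ρ - φ) ^ α ≤ g φ)
    (hc : h ρ ≤ c) :
    ∃ k > 0, ∃ N : ℕ, ∀ n ≥ N, ∀ φ ∈ Ico (ρ / 2) (ρ - 1 / (n : ℝ)),
      (-k * D φ * (ρ - 1 / (n : ℝ) - φ) ^ β < 0) ∧
      (-k * D' φ * (ρ - 1 / (n : ℝ) - φ) ^ β
          + k * β * D φ * (ρ - 1 / (n : ℝ) - φ) ^ (β - 1)
        < h φ - c - D φ * g φ / (-k * D φ * (ρ - 1 / (n : ℝ) - φ) ^ β)) := by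
  obtain ⟨hα0, hα1⟩ := hα
  obtain ⟨hβl, hβ1⟩ := hβ
  have hβ0 : 0 < β := lt_trans (by linarith) hβl
  have hDc : ContinuousOn D (Icc 0 ρ) := fun x hx =>
    (hD' x hx).continuousAt.continuousWithinAt
  obtain ⟨A, hA⟩ := isCompact_Icc.exists_bound_of_continuousOn hD'c
  obtain ⟨M, hM⟩ := isCompact_Icc.exists_bound_of_continuousOn hDc
  obtain ⟨H0, hH0⟩ := isCompact_Icc.exists_bound_of_continuousOn hh
  have h0mem : (0:ℝ) ∈ Icc 0 ρ := ⟨le_refl 0, hρ.le⟩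
  have hA0 : 0 ≤ A := le_trans (abs_nonneg _) (hA 0 h0mem)
  have hM0 : 0 ≤ M := le_trans (abs_nonneg _) (hM 0 h0mem)
  have hH00 : 0 ≤ H0 := le_trans (abs_nonneg _) (hH0 0 h0mem)
  obtain ⟨H, hHdef⟩ : ∃ H : ℝ, H = H0 + |c| := ⟨_, rfl⟩
  have hHnn : 0 ≤ H := by rw [hHdef]; positivity
  obtain ⟨P, hPdef⟩ : ∃ P : ℝ,
      P = A * ρ ^ (2*β - α) + β * M * ρ ^ (2*β - 1 - α) + H * ρ ^ (β - α) :=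
    ⟨_, rfl⟩
  have hPnn : 0 ≤ P := by
    have h1 : (0:ℝ) ≤ ρ ^ (2*β - α) := Real.rpow_nonneg hρ.le _
    have h2 : (0:ℝ) ≤ ρ ^ (2*β - 1 - α) := Real.rpow_nonneg hρ.le _
    have h3 : (0:ℝ) ≤ ρ ^ (β - α) := Real.rpow_nonneg hρ.le _
    have := mul_nonneg (mul_nonneg hβ0.le hM0) h2
    have := mul_nonneg hA0 h1
    have := mul_nonneg hHnn h3
    rw [hPdef]; linarith
  have hP1 : 0 < P + 1 := by linarith
  obtain ⟨k, hkdef⟩ : ∃ k : ℝ, k = min 1 (L / (2 * (P + 1))) := ⟨_, rfl⟩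
  have hk0 : 0 < k := hkdef ▸ lt_min one_pos (div_pos hL (by linarith))
  have hk1 : k ≤ 1 := hkdef ▸ min_le_left _ _
  have hkP : k * (P + 1) ≤ L / 2 := by
    have h1 : k ≤ L / (2 * (P + 1)) := hkdef ▸ min_le_right _ _
    have h2 : k * (P + 1) ≤ (L / (2 * (P + 1))) * (P + 1) :=
      mul_le_mul_of_nonneg_right h1 hP1.le
    have h3 : (L / (2 * (P + 1))) * (P + 1) = L / 2 := by
      field_simp
    linarith
  have hkPL : k * P < L / 2 := by
    have : k * (P + 1) = k * P + k := by ring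
    linarith
  refine ⟨k, hk0, 0, fun n _ φ hφ => ?_⟩
  obtain ⟨hφ1, hφ2⟩ := hφ
  obtain ⟨s, hsdef⟩ : ∃ s : ℝ, s = ρ - 1 / (n:ℝ) - φ := ⟨_, rfl⟩
  rw [← hsdef]
  have hn0 : (0:ℝ) ≤ 1 / (n:ℝ) := by positivity
  have hs0 : 0 < s := by rw [hsdef]; linarith
  have hsρφ : s ≤ ρ - φ := by rw [hsdef]; linarith
  have hφ0 : 0 < φ := by linarith
  have hφρ : φ < ρ := by linarith
  have hsρ : s ≤ ρ := by linarith
  have hφmem : φ ∈ Icc 0 ρ := ⟨hφ0.le, hφρ.le⟩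
  have hφmem2 : φ ∈ Icc (ρ/2) ρ := ⟨hφ1, hφρ.le⟩
  have hDφ : 0 < D φ := hDpos φ ⟨hφ0, hφρ⟩
  have hsβ : 0 < s ^ β := Real.rpow_pos_of_pos hs0 β
  have hsβ1 : 0 < s ^ (β - 1) := Real.rpow_pos_of_pos hs0 _
  have hsα : 0 < s ^ α := Real.rpow_pos_of_pos hs0 α
  constructor
  · have h1 := mul_pos (mul_pos hk0 hDφ) hsβ
    have h2 : -k * D φ * s ^ β = -(k * D φ * s ^ β) := by ring
    linarith
  -- bounds at φ
  have hDA : -D' φ ≤ A := le_trans (neg_le_abs _) (hA φ hφmem)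
  have hDM : D φ ≤ M := le_trans (le_abs_self _) (hM φ hφmem)
  have hhH : -(h φ - c) ≤ H := by
    have h1 : |h φ| ≤ H0 := hH0 φ hφmem
    have h2 : -(h φ) ≤ |h φ| := neg_le_abs _
    have h3 : c ≤ |c| := le_abs_self _
    rw [hHdef]; linarith
  -- power identities and bounds
  have e1 : s ^ β * s ^ β = s ^ (2*β) := by
    rw [← Real.rpow_add hs0]; ring_nf
  have e2 : s ^ (β - 1) * s ^ β = s ^ (2*β - 1) := by
    rw [← Real.rpow_add hs0]; ring_nf
  have b1 : s ^ (2*β) ≤ s ^ α * ρ ^ (2*β - α) := by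
    have h1 : s ^ (2*β) = s ^ α * s ^ (2*β - α) := by
      rw [← Real.rpow_add hs0]; ring_nf
    rw [h1]
    exact mul_le_mul_of_nonneg_left
      (Real.rpow_le_rpow hs0.le hsρ (by linarith)) hsα.le
  have b2 : s ^ (2*β - 1) ≤ s ^ α * ρ ^ (2*β - 1 - α) := by
    have h1 : s ^ (2*β - 1) = s ^ α * s ^ (2*β - 1 - α) := by
      rw [← Real.rpow_add hs0]; ring_nf
    rw [h1]
    exact mul_le_mul_of_nonneg_left
      (Real.rpow_le_rpow hs0.le hsρ (by linarith)) hsα.le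
  have b3 : s ^ β ≤ s ^ α * ρ ^ (β - α) := by
    have h1 : s ^ β = s ^ α * s ^ (β - α) := by
      rw [← Real.rpow_add hs0]; ring_nf
    rw [h1]
    exact mul_le_mul_of_nonneg_left
      (Real.rpow_le_rpow hs0.le hsρ (by linarith)) hsα.le
  -- the key multiplied inequality
  have key : (-k * D' φ * s ^ β + k * β * D φ * s ^ (β - 1) - (h φ - c))
      * (k * s ^ β) < g φ := by
    have expand : (-k * D' φ * s ^ β + k * β * D φ * s ^ (β - 1) - (h φ - c))
        * (k * s ^ β)
        = k^2 * (-D' φ) * (s ^ β * s ^ β)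
          + k^2 * (β * D φ) * (s ^ (β - 1) * s ^ β)
          + k * (-(h φ - c)) * s ^ β := by ring
    rw [expand, e1, e2]
    have hk2 : (0:ℝ) ≤ k^2 := sq_nonneg k
    have p1 : k^2 * (-D' φ) * s ^ (2*β) ≤ k^2 * A * s ^ (2*β) :=
      mul_le_mul_of_nonneg_right (mul_le_mul_of_nonneg_left hDA hk2)
        (Real.rpow_nonneg hs0.le _)
    have p2 : k^2 * (β * D φ) * s ^ (2*β - 1) ≤ k^2 * (β * M) * s ^ (2*β - 1) :=
      mul_le_mul_of_nonneg_right
        (mul_le_mul_of_nonneg_left (mul_le_mul_of_nonneg_left hDM hβ0.le) hk2)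
        (Real.rpow_nonneg hs0.le _)
    have p3 : k * (-(h φ - c)) * s ^ β ≤ k * H * s ^ β :=
      mul_le_mul_of_nonneg_right (mul_le_mul_of_nonneg_left hhH hk0.le)
        (Real.rpow_nonneg hs0.le _)
    have q1 : k^2 * A * s ^ (2*β) ≤ k^2 * A * (s ^ α * ρ ^ (2*β - α)) :=
      mul_le_mul_of_nonneg_left b1 (by positivity)
    have q2 : k^2 * (β * M) * s ^ (2*β - 1)
        ≤ k^2 * (β * M) * (s ^ α * ρ ^ (2*β - 1 - α)) :=
      mul_le_mul_of_nonneg_left b2 (by positivity)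
    have q3 : k * H * s ^ β ≤ k * H * (s ^ α * ρ ^ (β - α)) :=
      mul_le_mul_of_nonneg_left b3 (by positivity)
    have hk2k : k^2 ≤ k := by
      have h1 : k * k ≤ k * 1 := mul_le_mul_of_nonneg_left hk1 hk0.le
      have h2 : k^2 = k * k := sq k
      linarith
    have c1 : k^2 * A * (s ^ α * ρ ^ (2*β - α))
        ≤ k * A * (s ^ α * ρ ^ (2*β - α)) := by
      apply mul_le_mul_of_nonneg_right (mul_le_mul_of_nonneg_right hk2k hA0)
      positivity
    have c2 : k^2 * (β * M) * (s ^ α * ρ ^ (2*β - 1 - α))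
        ≤ k * (β * M) * (s ^ α * ρ ^ (2*β - 1 - α)) := by
      apply mul_le_mul_of_nonneg_right
        (mul_le_mul_of_nonneg_right hk2k (by positivity))
      positivity
    have cid : k * A * (s ^ α * ρ ^ (2*β - α))
        + k * (β * M) * (s ^ α * ρ ^ (2*β - 1 - α))
        + k * H * (s ^ α * ρ ^ (β - α)) = s ^ α * (k * P) := by
      rw [hPdef]; ring
    have sum1 : k^2 * A * (s ^ α * ρ ^ (2*β - α))
        + k^2 * (β * M) * (s ^ α * ρ ^ (2*β - 1 - α))
        + k * H * (s ^ α * ρ ^ (β - α))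
        ≤ s ^ α * (k * P) := by linarith [c1, c2, cid]
    have sum2 : s ^ α * (k * P) < s ^ α * L :=
      mul_lt_mul_of_pos_left (by linarith) hsα
    have sum3 : s ^ α * L ≤ (ρ - φ) ^ α * L :=
      mul_le_mul_of_nonneg_right
        (Real.rpow_le_rpow hs0.le hsρφ hα0.le) hL.le
    have sum4 : L * (ρ - φ) ^ α ≤ g φ := hgL φ hφmem2
    have comm : (ρ - φ) ^ α * L = L * (ρ - φ) ^ α := mul_comm _ _
    linarith [p1, p2, p3, q1, q2, q3, sum1, sum2, sum3, sum4, comm]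
  have hdiveq : D φ * g φ / (-k * D φ * s ^ β) = -(g φ / (k * s ^ β)) := by
    field_simp
  rw [hdiveq, sub_neg_eq_add]
  have hdiv : -k * D' φ * s ^ β + k * β * D φ * s ^ (β - 1) - (h φ - c)
      < g φ / (k * s ^ β) := (lt_div_iff₀ (by positivity)).mpr key
  linarith
end
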